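/- arXiv:2409.20092 — 3 statements merged into one kernel-verified Lean document; each statement's English description precedes it below -/
import Mathlib

section
/- Let p : ℝ → ℝ be a function satisfying (i) monotonicity: for all t₁, t₂, t₃ ∈ ℝ, |t₁ − t₂| > |t₁ − t₃| if and only if |p(t₁) − p(t₂)| > |p(t₁) − p(t₃)|, and (ii) translation invariance: for all t₁, t₂, l ∈ ℝ, |p(t₁ + l) − p(t₁)| = |p(t₂ + l) − p(t₂)|. Then p is linear: there exist k, b ∈ ℝ such that p(x) = k·x + b for all x ∈ ℝ. -/
/-!
Since `t + l` and `t - l` are equidistant from `t`, monotonicity makes `p (t + l)` and `p (t - l)`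
equidistant from `p t`; being distinct, they are symmetric about it. This is Jensen's equation, so
`x ↦ p x - p 0` is additive. Monotonicity also bounds it by `|p 1 - p 0|` on `[-1, 1]`, and an
additive map `ℝ → ℝ` bounded near `0` is continuous, hence linear.
-/

open Metric

def PreservesDistOrder {α β : Type*} [PseudoMetricSpace α] [PseudoMetricSpace β]
    (f : α → β) : Prop :=
  ∀ x y z, dist x y < dist x z ↔ dist (f x) (f y) < dist (f x) (f z)

namespace PreservesDistOrder

section PseudoMetric

variable {α β : Type*} [PseudoMetricSpace α] [PseudoMetricSpace β] {f : α → β}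

theorem dist_le_iff (hf : PreservesDistOrder f) (x y z : α) :
    dist x y ≤ dist x z ↔ dist (f x) (f y) ≤ dist (f x) (f z) := by
  simpa only [not_lt] using (hf x z y).not

theorem dist_eq (hf : PreservesDistOrder f) {x y z : α} (h : dist x y = dist x z) :
    dist (f x) (f y) = dist (f x) (f z) :=
  le_antisymm ((hf.dist_le_iff x y z).1 h.le) ((hf.dist_le_iff x z y).1 h.ge)

end PseudoMetric

theorem injective {α β : Type*} [MetricSpace α] [PseudoMetricSpace β] {f : α → β}
    (hf : PreservesDistOrder f) : Function.Injective f := by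
  intro x y hxy
  by_contra hne
  have := (hf x x y).1 (by rwa [dist_self, dist_pos])
  rw [hxy, dist_self] at this
  exact this.false

variable {p : ℝ → ℝ}

theorem map_add_add_map_sub (hp : PreservesDistOrder p) (t l : ℝ) :
    p (t + l) + p (t - l) = 2 * p t := by
  have h := hp.dist_eq (x := t) (y := t + l) (z := t - l) (by simp)
  rw [Real.dist_eq, Real.dist_eq] at h
  rcases abs_eq_abs.1 h with h | h
  · obtain rfl : l = 0 := by linarith [hp.injective (by linarith : p (t + l) = p (t - l))]
    simp only [add_zero, sub_zero]
    ring
  · linarith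

theorem map_add_add_map_zero (hp : PreservesDistOrder p) (x y : ℝ) :
    p (x + y) + p 0 = p x + p y := by
  have hxy := hp.map_add_add_map_sub ((x + y) / 2) ((x - y) / 2)
  have hsum := hp.map_add_add_map_sub ((x + y) / 2) ((x + y) / 2)
  ring_nf at hxy hsum ⊢
  linarith

theorem abs_map_sub_map_zero_le (hp : PreservesDistOrder p) {x : ℝ} (hx : |x| ≤ 1) :
    |p x - p 0| ≤ |p 1 - p 0| := by
  simpa only [Real.dist_eq, zero_sub, abs_neg, abs_one, abs_sub_comm (p 0)] using
    (hp.dist_le_iff 0 x 1).1 (by simpa [Real.dist_eq] using hx)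

theorem eq_mul_add (hp : PreservesDistOrder p) (x : ℝ) :
    p x = (p 1 - p 0) * x + p 0 := by
  let g : ℝ →+ ℝ := AddMonoidHom.mk' (fun x ↦ p x - p 0) fun x y ↦ by
    linarith [hp.map_add_add_map_zero x y]
  have hg : Continuous g := by
    refine g.continuous_of_isBounded_nhds_zero (closedBall_mem_nhds 0 one_pos)
      ((isBounded_closedBall (x := 0) (r := |p 1 - p 0|)).subset ?_)
    rintro _ ⟨y, hy, rfl⟩
    simpa [g, Real.dist_eq] using hp.abs_map_sub_map_zero_le (by simpa [Real.dist_eq] using hy)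
  have := map_real_smul g hg x 1
  simp only [smul_eq_mul, mul_one, AddMonoidHom.mk'_apply, g] at this
  linarith

end PreservesDistOrder

theorem linear_positional_embedding_general
    (p : ℝ → ℝ)
    (hmono : ∀ t₁ t₂ t₃ : ℝ, |t₁ - t₂| > |t₁ - t₃| ↔ |p t₁ - p t₂| > |p t₁ - p t₃|) :
    ∃ k b : ℝ, ∀ x : ℝ, p x = k * x + b := by
  have hp : PreservesDistOrder p := fun x y z ↦ by
    simpa only [Real.dist_eq, gt_iff_lt] using hmono x z y
  exact ⟨_, _, hp.eq_mul_add⟩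

theorem linear_positional_embedding
    (p : ℝ → ℝ)
    (hmono : ∀ t₁ t₂ t₃ : ℝ, |t₁ - t₂| > |t₁ - t₃| ↔ |p t₁ - p t₂| > |p t₁ - p t₃|)
    (htrans : ∀ t₁ t₂ l : ℝ, |p (t₁ + l) - p t₁| = |p (t₂ + l) - p t₂|) :
    ∃ k b : ℝ, ∀ x : ℝ, p x = k * x + b :=
  linear_positional_embedding_general p hmono
end

section
/- Let p : ℝ → ℝ satisfy monotonicity: for all t₁, t₂, t₃ ∈ ℝ, |t₁ − t₂| > |t₁ − t₃| if and only if |p(t₁) − p(t₂)| > |p(t₁) − p(t₃)|. Then p is strictly monotone, i.e., p is either strictly increasing or strictly decreasing on ℝ. -/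
/-!
Comparing distances from the two endpoints of `x < y < z` shows that `p y` lies strictly between
`p x` and `p z`, and comparing `|a - b|` with `|a - a| = 0` shows that `p` is injective. A function
that preserves strict betweenness has the same direction on nested pairs, hence on any two pairs
(both sit inside a common one), so it is strictly monotone or strictly antitone.
-/

section LinearOrder

variable {α β : Type*} [LinearOrder α] [LinearOrder β]

def PreservesStrictBtw (f : α → β) : Prop :=
  ∀ x y z, x < y → y < z → (f x < f y ∧ f y < f z) ∨ (f z < f y ∧ f y < f x)

namespace PreservesStrictBtw

variable {f : α → β}

theorem lt_iff_lt_of_le_of_le (hf : PreservesStrictBtw f) {s x y t : α}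
    (hsx : s ≤ x) (hxy : x < y) (hyt : y ≤ t) : f x < f y ↔ f s < f t := by
  have left_iff {x y z : α} (hxy : x < y) (hyz : y < z) : f x < f y ↔ f x < f z := by
    rcases hf x y z hxy hyz with h | h
    · exact ⟨fun _ => h.1.trans h.2, fun _ => h.1⟩
    · exact ⟨fun h' => absurd h.2 h'.asymm, fun h' => absurd (h.1.trans h.2) h'.asymm⟩
  have right_iff {x y z : α} (hxy : x < y) (hyz : y < z) : f y < f z ↔ f x < f z := by
    rcases hf x y z hxy hyz with h | h
    · exact ⟨fun _ => h.1.trans h.2, fun _ => h.2⟩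
    · exact ⟨fun h' => absurd h.1 h'.asymm, fun h' => absurd (h.1.trans h.2) h'.asymm⟩
  have extend_right : f x < f y ↔ f x < f t := by
    rcases hyt.lt_or_eq with hyt | rfl
    · exact left_iff hxy hyt
    · rfl
  rcases hsx.lt_or_eq with hsx | rfl
  · exact extend_right.trans (right_iff hsx (hxy.trans_le hyt))
  · exact extend_right

theorem strictMono_or_strictAnti (hf : PreservesStrictBtw f) (hf_inj : Function.Injective f) :
    StrictMono f ∨ StrictAnti f := by
  have same_direction {a b c d : α} (hab : a < b) (hcd : c < d) : f a < f b ↔ f c < f d :=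
    (hf.lt_iff_lt_of_le_of_le (min_le_left a c) hab (le_max_left b d)).trans
      (hf.lt_iff_lt_of_le_of_le (min_le_right a c) hcd (le_max_right b d)).symm
  by_cases hinc : ∃ a b, a < b ∧ f a < f b
  · obtain ⟨a, b, hab, hfab⟩ := hinc
    exact .inl fun x y hxy => (same_direction hxy hab).2 hfab
  · push Not at hinc
    exact .inr fun x y hxy => (hinc x y hxy).lt_of_ne (hf_inj.ne hxy.ne).symm

end PreservesStrictBtw

end LinearOrder

section OrderedAddGroup

variable {α β : Type*} [AddCommGroup α] [LinearOrder α] [IsOrderedAddMonoid α]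
  [AddCommGroup β] [LinearOrder β] [IsOrderedAddMonoid β]

theorem between_of_abs_sub_lt_abs_sub {a b c : β} (hab : |a - b| < |a - c|)
    (hcb : |c - b| < |c - a|) : (a < b ∧ b < c) ∨ (c < b ∧ b < a) := by
  have of_lt {a c : β} (hac : a < c) (hab : |a - b| < |a - c|) (hcb : |c - b| < |c - a|) :
      a < b ∧ b < c := by
    rw [abs_sub_comm a c, abs_of_pos (sub_pos.2 hac)] at hab
    rw [abs_of_pos (sub_pos.2 hac)] at hcb
    exact ⟨sub_lt_sub_iff_left c |>.1 (abs_sub_lt_iff.1 hcb).1,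
      sub_lt_sub_iff_right a |>.1 (abs_sub_lt_iff.1 hab).2⟩
  rcases lt_trichotomy a c with hac | rfl | hca
  · exact .inl (of_lt hac hab hcb)
  · exact absurd (by simpa using hab) (abs_nonneg (a - b)).not_gt
  · exact .inr (of_lt hca hcb hab)

def PreservesAbsSubLT (p : α → β) : Prop :=
  ∀ a b c, |a - c| < |a - b| → |p a - p c| < |p a - p b|

namespace PreservesAbsSubLT

variable {p : α → β}

theorem injective (hp : PreservesAbsSubLT p) : Function.Injective p := by
  intro a b hpab
  by_contra hab
  have := hp a b a (by simpa [sub_eq_zero] using hab)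
  simp [hpab] at this

theorem preservesStrictBtw (hp : PreservesAbsSubLT p) : PreservesStrictBtw p := by
  intro x y z hxy hyz
  refine between_of_abs_sub_lt_abs_sub (hp x z y ?_) (hp z x y ?_)
  · rw [abs_sub_comm, abs_sub_comm x, abs_of_pos (sub_pos.2 hxy),
      abs_of_pos (sub_pos.2 (hxy.trans hyz))]
    exact sub_lt_sub_right hyz x
  · rw [abs_of_pos (sub_pos.2 hyz), abs_of_pos (sub_pos.2 (hxy.trans hyz))]
    exact sub_lt_sub_left hxy z

end PreservesAbsSubLT

end OrderedAddGroup

theorem monotonicity_implies_strict_monotone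
    (p : ℝ → ℝ)
    (hmono : ∀ t₁ t₂ t₃ : ℝ, |t₁ - t₂| > |t₁ - t₃| ↔ |p t₁ - p t₂| > |p t₁ - p t₃|) :
    StrictMono p ∨ StrictAnti p := by
  have hp : PreservesAbsSubLT p := fun a b c => (hmono a b c).mp
  exact hp.preservesStrictBtw.strictMono_or_strictAnti hp.injective
end

section
/- Let p : ℝ → ℝ satisfy (i) monotonicity: for all t₁, t₂, t₃ ∈ ℝ, |t₁ − t₂| > |t₁ − t₃| if and only if |p(t₁) − p(t₂)| > |p(t₁) − p(t₃)|, and (ii) translation invariance: for all t₁, t₂, l ∈ ℝ, |p(t₁ + l) − p(t₁)| = |p(t₂ + l) − p(t₂)|. Then the signed increment is independent of the anchor time: for all t₁, t₂, l ∈ ℝ, p(t₁ + l) − p(t₁) = p(t₂ + l) − p(t₂). -/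
theorem signed_increment_anchor_independent
    (p : ℝ → ℝ)
    (hmono : ∀ t₁ t₂ t₃ : ℝ, |t₁ - t₂| > |t₁ - t₃| ↔ |p t₁ - p t₂| > |p t₁ - p t₃|)
    (htrans : ∀ t₁ t₂ l : ℝ, |p (t₁ + l) - p t₁| = |p (t₂ + l) - p t₂|) :
    ∀ t₁ t₂ l : ℝ, p (t₁ + l) - p t₁ = p (t₂ + l) - p t₂ := by
  have hinj : ∀ a b : ℝ, p a = p b → a = b := by
    intro a b hab
    by_contra h
    have h1 : |a - b| > |a - a| := by
      simpa using abs_pos.mpr (sub_ne_zero.mpr h)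
    have h2 := (hmono a b a).mp h1
    simp [hab] at h2
  intro t₁ t₂ l
  have habs := htrans t₁ t₂ l
  rcases abs_eq_abs.mp habs with h | h
  · exact h
  · set c := p (t₁ + l) - p t₁ with hc
    by_cases hc0 : c = 0
    · rw [hc0] at h ⊢; linarith
    · exfalso
      have hl : l ≠ 0 := by
        intro hl0
        apply hc0
        rw [hc, hl0, add_zero, sub_self]
      have h2 := htrans t₁ (t₁ + l) (t₂ - t₁)
      have e1 : t₁ + (t₂ - t₁) = t₂ := by ring
      have e2 : t₁ + l + (t₂ - t₁) = t₂ + l := by ring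
      rw [e1, e2] at h2
      -- p (t₂+l) - p t₂ = -c
      have hd2 : p (t₂ + l) - p t₂ = -c := by linarith
      have hx : p t₂ - p t₁ = c := by
        rcases abs_eq_abs.mp h2 with h3 | h3
        · exact absurd (by linarith : c = 0) hc0
        · linarith
      have hpt2 : p t₂ = p (t₁ + l) := by rw [hc] at hx; linarith
      have ht2 : t₂ = t₁ + l := hinj _ _ hpt2
      have hpp : p (t₁ + l + l) = p t₁ := by
        have : p (t₂ + l) - p t₂ = -c := hd2
        rw [ht2] at this
        rw [hc] at this
        linarith
      have hgt : |t₁ - (t₁ + l + l)| > |t₁ - (t₁ + l)| := by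
        have e3 : t₁ - (t₁ + l + l) = -(2 * l) := by ring
        have e4 : t₁ - (t₁ + l) = -l := by ring
        rw [e3, e4, abs_neg, abs_neg]
        have : |l| > 0 := abs_pos.mpr hl
        calc |2 * l| = 2 * |l| := by rw [abs_mul]; norm_num
          _ > |l| := by linarith
      have h5 := (hmono t₁ (t₁ + l + l) (t₁ + l)).mp hgt
      rw [hpp, sub_self, abs_zero] at h5
      exact absurd h5 (not_lt.mpr (abs_nonneg _))
end
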